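/- arXiv:1811.10340 — 4 statements merged into one kernel-verified Lean document; each statement's English description precedes it below -/
import Mathlib

section
/- Every orbit of the natural SL(2,ℤ)-action on ℤ^{2k} = (ℤ²)^{⊕k} which is not an A-orbit (i.e. which does not contain an element of the form (0, r) with r ∈ ℤ^k \ {0} in the first block) and is nonzero, contains an element η = (q, r) with the following property: there exist indices 1 ≤ ℓ₁ < ℓ₂ ≤ k such that r_j = 0 for all j < ℓ₁, q_j = 0 for all j < ℓ₂, and r_{ℓ₁} > 0, 0 ≤ r_{ℓ₂} < |q_{ℓ₂}|. -/
/-- The action of `SL(2,ℤ)` on `ℤ^{2k} = (ℤ²)^{⊕k}`, written as pairs `(q, r)` of vectors: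
`(a b; c d) · (q, r) = (a q + b r, c q + d r)`. -/
def sl2act (k : ℕ) (γ : Matrix.SpecialLinearGroup (Fin 2) ℤ)
    (v : (Fin k → ℤ) × (Fin k → ℤ)) : (Fin k → ℤ) × (Fin k → ℤ) :=
  (fun i => γ.1 0 0 * v.1 i + γ.1 0 1 * v.2 i,
   fun i => γ.1 1 0 * v.1 i + γ.1 1 1 * v.2 i)

lemma sl2act_mul (k : ℕ) (γ δ : Matrix.SpecialLinearGroup (Fin 2) ℤ)
    (v : (Fin k → ℤ) × (Fin k → ℤ)) :
    sl2act k (γ * δ) v = sl2act k γ (sl2act k δ v) := by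
  unfold sl2act
  simp only [Matrix.SpecialLinearGroup.coe_mul, Matrix.mul_apply, Fin.sum_univ_two]
  exact Prod.ext (funext fun i => by ring) (funext fun i => by ring)

def shear (n : ℤ) : Matrix.SpecialLinearGroup (Fin 2) ℤ :=
  ⟨!![1, 0; n, 1], by simp [Matrix.det_fin_two_of]⟩

lemma shear_entries (n : ℤ) : (shear n).1 0 0 = 1 ∧ (shear n).1 0 1 = 0 ∧
    (shear n).1 1 0 = n ∧ (shear n).1 1 1 = 1 := by
  refine ⟨?_, ?_, ?_, ?_⟩ <;> simp [shear]

lemma reduce_vec (a b : ℤ) (h : ¬(a = 0 ∧ b = 0)) :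
    ∃ γ : Matrix.SpecialLinearGroup (Fin 2) ℤ,
      γ.1 0 0 * a + γ.1 0 1 * b = 0 ∧ 0 < γ.1 1 0 * a + γ.1 1 1 * b := by
  have hg : 0 < Int.gcd a b := by
    rcases not_and_or.mp h with h | h
    · exact Int.gcd_pos_of_ne_zero_left b h
    · exact Int.gcd_pos_of_ne_zero_right a h
  set G : ℤ := (Int.gcd a b : ℤ) with hG
  have hGpos : 0 < G := Int.natCast_pos.mpr hg
  obtain ⟨a', ha⟩ : G ∣ a := Int.gcd_dvd_left a b
  obtain ⟨b', hb⟩ : G ∣ b := Int.gcd_dvd_right a b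
  set x := Int.gcdA a b
  set y := Int.gcdB a b
  have hbez : G = a * x + b * y := Int.gcd_eq_gcd_ab a b
  have h2 : G * (a' * x + b' * y) = a * x + b * y := by rw [ha, hb]; ring
  have hone : a' * x + b' * y = 1 := by
    have h3 : G * (a' * x + b' * y) = G * 1 := by rw [h2, ← hbez, mul_one]
    exact mul_left_cancel₀ (ne_of_gt hGpos) h3
  refine ⟨⟨!![b', -a'; x, y], by rw [Matrix.det_fin_two_of]; linarith [hone]⟩, ?_, ?_⟩
  · show !![b', -a'; x, y] 0 0 * a + !![b', -a'; x, y] 0 1 * b = 0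
    simp only [Matrix.cons_val', Matrix.cons_val_zero, Matrix.cons_val_one, Matrix.head_cons,
      Matrix.empty_val', Matrix.cons_val_fin_one, Matrix.head_fin_const, Matrix.of_apply]
    rw [ha, hb]; ring
  · show 0 < !![b', -a'; x, y] 1 0 * a + !![b', -a'; x, y] 1 1 * b
    simp only [Matrix.cons_val', Matrix.cons_val_zero, Matrix.cons_val_one, Matrix.head_cons,
      Matrix.empty_val', Matrix.cons_val_fin_one, Matrix.head_fin_const, Matrix.of_apply]
    have h4 : x * a + y * b = G := by linarith [hbez]
    rw [h4]; exact hGpos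

theorem stmt7 (k : ℕ) (hk : 2 ≤ k) (v : (Fin k → ℤ) × (Fin k → ℤ)) (hv : v ≠ 0)
    (hB : ¬ ∃ (γ : Matrix.SpecialLinearGroup (Fin 2) ℤ) (r : Fin k → ℤ),
        r ≠ 0 ∧ sl2act k γ v = (0, r)) :
    ∃ γ : Matrix.SpecialLinearGroup (Fin 2) ℤ, ∃ ℓ₁ ℓ₂ : Fin k, ℓ₁ < ℓ₂ ∧
      (∀ j, j < ℓ₁ → (sl2act k γ v).2 j = 0) ∧
      (∀ j, j < ℓ₂ → (sl2act k γ v).1 j = 0) ∧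
      0 < (sl2act k γ v).2 ℓ₁ ∧
      0 ≤ (sl2act k γ v).2 ℓ₂ ∧ (sl2act k γ v).2 ℓ₂ < |(sl2act k γ v).1 ℓ₂| := by
  classical
  -- first nonzero column
  set S : Finset (Fin k) := Finset.univ.filter (fun i => ¬(v.1 i = 0 ∧ v.2 i = 0)) with hSdef
  have hS : S.Nonempty := by
    by_contra h
    apply hv
    rw [Finset.not_nonempty_iff_eq_empty] at h
    have hall : ∀ i, v.1 i = 0 ∧ v.2 i = 0 := by
      intro i
      by_contra hi
      have : i ∈ S := by
        simp only [hSdef, Finset.mem_filter, Finset.mem_univ, true_and]; exact hi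
      simp [h] at this
    exact Prod.ext (funext fun i => (hall i).1) (funext fun i => (hall i).2)
  set ℓ₁ := S.min' hS with hl1def
  have hl1mem : ℓ₁ ∈ S := S.min'_mem hS
  have hl1 : ¬(v.1 ℓ₁ = 0 ∧ v.2 ℓ₁ = 0) := by
    simpa only [hSdef, Finset.mem_filter, Finset.mem_univ, true_and] using hl1mem
  have hl1min : ∀ j, j < ℓ₁ → v.1 j = 0 ∧ v.2 j = 0 := by
    intro j hj
    by_contra hjn
    have : j ∈ S := by
      simp only [hSdef, Finset.mem_filter, Finset.mem_univ, true_and]; exact hjn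
    exact absurd (S.min'_le j this) (not_le.mpr hj)
  obtain ⟨γ₁, hγ0, hγ1⟩ := reduce_vec (v.1 ℓ₁) (v.2 ℓ₁) hl1
  set w := sl2act k γ₁ v with hwdef
  have hw1l1 : w.1 ℓ₁ = 0 := hγ0
  have hw2l1 : 0 < w.2 ℓ₁ := hγ1
  have hwzero : ∀ j, j < ℓ₁ → w.1 j = 0 ∧ w.2 j = 0 := by
    intro j hj
    obtain ⟨h1, h2⟩ := hl1min j hj
    constructor <;> simp [hwdef, sl2act, h1, h2]
  -- w.1 is not identically zero
  have hw1ne : ∃ i, w.1 i ≠ 0 := by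
    by_contra h
    push_neg at h
    apply hB
    refine ⟨γ₁, w.2, ?_, ?_⟩
    · intro h0
      have : w.2 ℓ₁ = 0 := by rw [h0]; rfl
      omega
    · exact Prod.ext (funext fun i => h i) rfl
  set T : Finset (Fin k) := Finset.univ.filter (fun i => w.1 i ≠ 0) with hTdef
  have hT : T.Nonempty := by
    obtain ⟨i, hi⟩ := hw1ne
    exact ⟨i, by simp only [hTdef, Finset.mem_filter, Finset.mem_univ, true_and]; exact hi⟩
  set ℓ₂ := T.min' hT with hl2def
  have hl2mem : ℓ₂ ∈ T := T.min'_mem hT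
  have hl2ne : w.1 ℓ₂ ≠ 0 := by simpa only [hTdef, Finset.mem_filter, Finset.mem_univ, true_and] using hl2mem
  have hl2min : ∀ j, j < ℓ₂ → w.1 j = 0 := by
    intro j hj
    by_contra hjn
    have : j ∈ T := by
      simp only [hTdef, Finset.mem_filter, Finset.mem_univ, true_and]; exact hjn
    exact absurd (T.min'_le j this) (not_le.mpr hj)
  have hlt : ℓ₁ < ℓ₂ := by
    rcases lt_trichotomy ℓ₁ ℓ₂ with h | h | h
    · exact h
    · exact absurd (h ▸ hw1l1) hl2ne
    · exact absurd (hwzero ℓ₂ h).1 hl2ne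
  -- the shear
  set m := w.1 ℓ₂ with hmdef
  set r := w.2 ℓ₂ with hrdef
  set n : ℤ := if 0 ≤ m then -(r / m) else r / (-m) with hndef
  have habs : 0 < |m| := abs_pos.mpr hl2ne
  have hkey : n * m + r = r % |m| := by
    rw [Int.emod_def]
    rcases lt_or_ge m 0 with hm | hm
    · rw [hndef, if_neg (not_le.mpr hm), abs_of_neg hm]; ring
    · have hm' : 0 < m := lt_of_le_of_ne hm (Ne.symm hl2ne)
      rw [hndef, if_pos hm, abs_of_pos hm']; ring
  obtain ⟨hs00, hs01, hs10, hs11⟩ := shear_entries n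
  refine ⟨shear n * γ₁, ℓ₁, ℓ₂, hlt, ?_, ?_, ?_, ?_, ?_⟩ <;>
    rw [sl2act_mul, ← hwdef]
  · intro j hj
    obtain ⟨h1, h2⟩ := hwzero j hj
    simp [sl2act, hs10, hs11, h1, h2]
  · intro j hj
    simp [sl2act, hs00, hs01, hl2min j hj]
  · simp [sl2act, hs10, hs11, hw1l1]; exact hw2l1
  · show 0 ≤ (shear n).1 1 0 * w.1 ℓ₂ + (shear n).1 1 1 * w.2 ℓ₂
    rw [hs10, hs11, one_mul, ← hmdef, ← hrdef, hkey]
    exact Int.emod_nonneg r (ne_of_gt habs)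
  · show (shear n).1 1 0 * w.1 ℓ₂ + (shear n).1 1 1 * w.2 ℓ₂ <
      |(shear n).1 0 0 * w.1 ℓ₂ + (shear n).1 0 1 * w.2 ℓ₂|
    rw [hs00, hs01, hs10, hs11, one_mul, zero_mul, add_zero, one_mul, ← hmdef, ← hrdef, hkey]
    exact Int.emod_lt_of_pos r habs
end

section
/- Under the SL(2,ℤ)-action on ℤ^{2k}: (a) the stabilizer of any element of the form (0, r), r ∈ ℤ^k \ {0}, equals the group of lower-triangular unipotent integer matrices { (1 0; n 1) : n ∈ ℤ }; (b) the stabilizer of any element η = (q, r) satisfying the normal form of a B-orbit representative (there exist 1 ≤ ℓ₁ < ℓ₂ ≤ k with r_j = 0 for j < ℓ₁, q_j = 0 for j < ℓ₂, r_{ℓ₁} > 0, and 0 ≤ r_{ℓ₂} < |q_{ℓ₂}|) is trivial. -/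
theorem stmt8 (k : ℕ) (hk : 2 ≤ k) :
    (∀ r : Fin k → ℤ, r ≠ 0 → ∀ γ : Matrix.SpecialLinearGroup (Fin 2) ℤ,
      sl2act k γ (0, r) = (0, r) ↔ ∃ n : ℤ, γ.1 = !![1, 0; n, 1]) ∧
    (∀ (v : (Fin k → ℤ) × (Fin k → ℤ)) (ℓ₁ ℓ₂ : Fin k), ℓ₁ < ℓ₂ →
      (∀ j, j < ℓ₁ → v.2 j = 0) → (∀ j, j < ℓ₂ → v.1 j = 0) →
      0 < v.2 ℓ₁ → 0 ≤ v.2 ℓ₂ → v.2 ℓ₂ < |v.1 ℓ₂| →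
      ∀ γ : Matrix.SpecialLinearGroup (Fin 2) ℤ, sl2act k γ v = v → γ = 1) := by
  constructor
  · intro r hr γ
    constructor
    · intro h
      obtain ⟨i, hi⟩ := Function.ne_iff.mp hr
      have h1 := congrFun (congrArg Prod.fst h) i
      have h2 := congrFun (congrArg Prod.snd h) i
      simp only [sl2act, Pi.zero_apply, mul_zero, zero_add] at h1 h2
      have hb : γ.1 0 1 = 0 := by
        rcases mul_eq_zero.mp h1 with h | h
        · exact h
        · exact absurd h hi
      have hd : γ.1 1 1 = 1 := by
        have : (γ.1 1 1 - 1) * r i = 0 := by ring_nf; linarith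
        rcases mul_eq_zero.mp this with h | h
        · linarith
        · exact absurd h hi
      have hdet := γ.2
      rw [Matrix.det_fin_two] at hdet
      rw [hb, hd] at hdet
      refine ⟨γ.1 1 0, ?_⟩
      ext a b
      fin_cases a <;> fin_cases b <;>
        simp_all [Matrix.cons_val_zero, Matrix.cons_val_one] <;> linarith
    · rintro ⟨n, hn⟩
      simp only [sl2act, hn]
      ext i <;> simp [Matrix.cons_val_zero, Matrix.cons_val_one]
  · intro v ℓ₁ ℓ₂ hlt h2z h1z hr1 hr2 hq2 γ h
    have hq1 : v.1 ℓ₁ = 0 := h1z ℓ₁ hlt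
    have hq2ne : v.1 ℓ₂ ≠ 0 := by
      intro h0
      rw [h0] at hq2
      simp at hq2
      omega
    have ha1 := congrFun (congrArg Prod.fst h) ℓ₁
    have hb1 := congrFun (congrArg Prod.snd h) ℓ₁
    have hb2 := congrFun (congrArg Prod.snd h) ℓ₂
    simp only [sl2act, hq1, mul_zero, zero_add] at ha1 hb1 hb2
    have hb : γ.1 0 1 = 0 := by
      rcases mul_eq_zero.mp ha1 with h | h
      · exact h
      · exact absurd h hr1.ne'
    have hd : γ.1 1 1 = 1 := by
      have : (γ.1 1 1 - 1) * v.2 ℓ₁ = 0 := by ring_nf; linarith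
      rcases mul_eq_zero.mp this with h | h
      · linarith
      · exact absurd h hr1.ne'
    have hdet := γ.2
    rw [Matrix.det_fin_two, hb, hd] at hdet
    have hc : γ.1 1 0 = 0 := by
      have : γ.1 1 0 * v.1 ℓ₂ = 0 := by rw [hd] at hb2; linarith
      rcases mul_eq_zero.mp this with h | h
      · exact h
      · exact absurd h hq2ne
    ext a b
    fin_cases a <;> fin_cases b <;>
      simp_all [Matrix.one_apply] <;> linarith
end

section
/- Let c and N be positive integers, let R = (a₀ b₀; c₀ d₀) ∈ SL(2,ℤ) with c₀ ≡ c (mod N). The map (a b; c d) ↦ (a mod cN, d mod cN) gives a bijection from the set of double cosets Γ'_∞ T Γ'_∞ with T ∈ SL(2,ℤ), T ≡ R (mod N), and lower-left entry equal to c, onto the set U[c,N;a₀,b₀,d₀] of pairs (a, d) in (ℤ/cNℤ)² satisfying a ≡ a₀ (mod N), d ≡ d₀ (mod N), and a·d ≡ 1 + b₀·c (mod cN). Here Γ'_∞ = { (1 nN; 0 1) : n ∈ ℤ }. -/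
/-- The matrix `(1, nN; 0, 1)`, an element of `Γ'_∞ = Γ(N) ∩ Γ_∞`. -/
def Umat (N : ℕ) (n : ℤ) : Matrix.SpecialLinearGroup (Fin 2) ℤ :=
  ⟨!![1, n * (N : ℤ); 0, 1], by norm_num [Matrix.det_fin_two_of]⟩

/-- The set `U[c,N;a₀,b₀,d₀]` of pairs `(a,d) ∈ (ℤ/cNℤ)²` with `a ≡ a₀`, `d ≡ d₀ (mod N)`
and `a·d ≡ 1 + b₀·c (mod cN)`. -/
def Uset (c N : ℕ) (a₀ b₀ d₀ : ℤ) : Set (ZMod (c * N) × ZMod (c * N)) :=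
  {p | (ZMod.castHom (dvd_mul_left N c) (ZMod N)) p.1 = (a₀ : ZMod N) ∧
       (ZMod.castHom (dvd_mul_left N c) (ZMod N)) p.2 = (d₀ : ZMod N) ∧
       p.1 * p.2 = ((1 + b₀ * (c : ℤ) : ℤ) : ZMod (c * N))}

lemma Umat_mul_entries (N : ℕ) (n m : ℤ) (T : Matrix.SpecialLinearGroup (Fin 2) ℤ) :
    (Umat N n * T * Umat N m).1 =
      !![T.1 0 0 + n * N * T.1 1 0,
         (T.1 0 0 + n * N * T.1 1 0) * (m * N) + (T.1 0 1 + n * N * T.1 1 1);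
         T.1 1 0, T.1 1 0 * (m * N) + T.1 1 1] := by
  rw [show (Umat N n * T * Umat N m).1 = (Umat N n).1 * T.1 * (Umat N m).1 from rfl]
  ext i j
  fin_cases i <;> fin_cases j <;>
    simp [Umat, Matrix.mul_apply, Matrix.vecMul, dotProduct, Fin.sum_univ_succ]

/-- The map `T = (a b; c d) ↦ (a mod cN, d mod cN)` induces a bijection from the set of
double cosets `Γ'_∞ T Γ'_∞` with `T ∈ SL(2,ℤ)`, `T ≡ R (mod N)`, lower-left entry `c`,
onto `U[c,N;a₀,b₀,d₀]`: it identifies two such `T, T'` exactly when they lie in the same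
double coset, and its image is exactly `U[c,N;a₀,b₀,d₀]`. -/
theorem stmt10 (c N : ℕ) (hc : 0 < c) (hN : 0 < N)
    (R : Matrix.SpecialLinearGroup (Fin 2) ℤ)
    (hcong : ((R.1 1 0 : ℤ) : ZMod N) = ((c : ℕ) : ZMod N)) :
    (∀ T T' : Matrix.SpecialLinearGroup (Fin 2) ℤ,
      (∀ i j, ((T.1 i j : ℤ) : ZMod N) = ((R.1 i j : ℤ) : ZMod N)) → T.1 1 0 = (c : ℤ) →
      (∀ i j, ((T'.1 i j : ℤ) : ZMod N) = ((R.1 i j : ℤ) : ZMod N)) → T'.1 1 0 = (c : ℤ) →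
      ((((T.1 0 0 : ℤ) : ZMod (c * N)), ((T.1 1 1 : ℤ) : ZMod (c * N))) =
          (((T'.1 0 0 : ℤ) : ZMod (c * N)), ((T'.1 1 1 : ℤ) : ZMod (c * N))) ↔
        ∃ n m : ℤ, T' = Umat N n * T * Umat N m)) ∧
    (∀ p : ZMod (c * N) × ZMod (c * N),
      p ∈ Uset c N (R.1 0 0) (R.1 0 1) (R.1 1 1) ↔
      ∃ T : Matrix.SpecialLinearGroup (Fin 2) ℤ,
        (∀ i j, ((T.1 i j : ℤ) : ZMod N) = ((R.1 i j : ℤ) : ZMod N)) ∧ T.1 1 0 = (c : ℤ) ∧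
        (((T.1 0 0 : ℤ) : ZMod (c * N)), ((T.1 1 1 : ℤ) : ZMod (c * N))) = p) := by
  have hc0 : (c : ℤ) ≠ 0 := by exact_mod_cast hc.ne'
  constructor
  · intro T T' hT hTc hT' hT'c
    constructor
    · intro h
      rw [Prod.mk.injEq] at h
      obtain ⟨h1, h2⟩ := h
      rw [ZMod.intCast_eq_intCast_iff] at h1 h2
      obtain ⟨n, hn⟩ := h1.dvd
      obtain ⟨m, hm⟩ := h2.dvd
      refine ⟨n, m, ?_⟩
      have e00 : T.1 0 0 + n * N * T.1 1 0 = T'.1 0 0 := by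
        rw [hTc]; push_cast at hn ⊢; linarith
      have e11 : T.1 1 0 * (m * N) + T.1 1 1 = T'.1 1 1 := by
        rw [hTc]; push_cast at hm ⊢; linarith
      have hdet : (Umat N n * T * Umat N m).1.det = 1 := (Umat N n * T * Umat N m).2
      rw [Umat_mul_entries, Matrix.det_fin_two_of] at hdet
      rw [e00, e11, hTc] at hdet
      have hdet' := T'.2
      rw [Matrix.det_fin_two, hT'c] at hdet'
      have e01 : (T'.1 0 0) * (m * N) + (T.1 0 1 + n * N * T.1 1 1) = T'.1 0 1 := by
        have h3 : ((T'.1 0 0) * (m * N) + (T.1 0 1 + n * N * T.1 1 1)) * (c : ℤ)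
            = T'.1 0 1 * (c : ℤ) := by linarith
        exact mul_right_cancel₀ hc0 h3
      apply Subtype.ext
      rw [Umat_mul_entries, e00, e01, e11, hTc, ← hT'c, ← Matrix.eta_fin_two]
    · rintro ⟨n, m, rfl⟩
      rw [Prod.mk.injEq, Umat_mul_entries]
      constructor
      · show ((T.1 0 0 : ℤ) : ZMod (c*N)) = ((T.1 0 0 + n * N * T.1 1 0 : ℤ) : ZMod (c*N))
        rw [hTc, ZMod.intCast_eq_intCast_iff]
        exact (Int.modEq_iff_dvd.mpr ⟨n, by push_cast; ring⟩)
      · show ((T.1 1 1 : ℤ) : ZMod (c*N)) = ((T.1 1 0 * (m * N) + T.1 1 1 : ℤ) : ZMod (c*N))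
        rw [hTc, ZMod.intCast_eq_intCast_iff]
        exact (Int.modEq_iff_dvd.mpr ⟨m, by push_cast; ring⟩)
  · haveI : NeZero (c * N) := ⟨(Nat.mul_pos hc hN).ne'⟩
    intro p
    constructor
    · rintro ⟨ha, hd, hprod⟩
      set a : ℤ := (p.1.val : ℤ) with ha_def
      set d : ℤ := (p.2.val : ℤ) with hd_def
      have hpa : ((a : ℤ) : ZMod (c*N)) = p.1 := by
        simp only [ha_def, Int.cast_natCast]
        exact ZMod.natCast_rightInverse p.1
      have hpd : ((d : ℤ) : ZMod (c*N)) = p.2 := by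
        simp only [hd_def, Int.cast_natCast]
        exact ZMod.natCast_rightInverse p.2
      have hmod : ((a * d : ℤ) : ZMod (c*N)) = ((1 + R.1 0 1 * (c:ℤ) : ℤ) : ZMod (c*N)) := by
        push_cast
        rw [hpa, hpd, hprod]
        push_cast
        ring
      rw [ZMod.intCast_eq_intCast_iff] at hmod
      obtain ⟨t, ht⟩ := hmod.dvd
      push_cast at ht
      set b : ℤ := R.1 0 1 - N * t with hb_def
      have hdet : a * d - b * (c:ℤ) = 1 := by
        rw [hb_def]; linear_combination -ht
      have h00 : ((a : ℤ) : ZMod N) = ((R.1 0 0 : ℤ) : ZMod N) := by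
        rw [← ha, ← hpa]
        exact (map_intCast (ZMod.castHom (dvd_mul_left N c) (ZMod N)) a).symm
      have h11 : ((d : ℤ) : ZMod N) = ((R.1 1 1 : ℤ) : ZMod N) := by
        rw [← hd, ← hpd]
        exact (map_intCast (ZMod.castHom (dvd_mul_left N c) (ZMod N)) d).symm
      have h01 : ((b : ℤ) : ZMod N) = ((R.1 0 1 : ℤ) : ZMod N) := by
        rw [hb_def]; push_cast; simp
      have h10 : (((c:ℤ) : ℤ) : ZMod N) = ((R.1 1 0 : ℤ) : ZMod N) := by
        push_cast; exact_mod_cast hcong.symm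
      refine ⟨⟨!![a, b; (c:ℤ), d], by rw [Matrix.det_fin_two_of]; linarith⟩, ?_, rfl, ?_⟩
      · intro i j
        fin_cases i <;> fin_cases j
        · exact h00
        · exact h01
        · exact h10
        · exact h11
      · show (((a : ℤ) : ZMod (c*N)), ((d : ℤ) : ZMod (c*N))) = p
        rw [hpa, hpd]
    · rintro ⟨T, hT, hTc, hp⟩
      rw [Prod.mk.injEq] at hp
      obtain ⟨hp1, hp2⟩ := hp
      have hdet := T.2
      rw [Matrix.det_fin_two, hTc] at hdet
      have hb : ((T.1 0 1 : ℤ) : ZMod N) = ((R.1 0 1 : ℤ) : ZMod N) := hT 0 1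
      rw [ZMod.intCast_eq_intCast_iff] at hb
      obtain ⟨s, hs⟩ := hb.dvd
      refine ⟨?_, ?_, ?_⟩
      · rw [← hp1, map_intCast (ZMod.castHom (dvd_mul_left N c) (ZMod N)) (T.1 0 0)]
        exact hT 0 0
      · rw [← hp2, map_intCast (ZMod.castHom (dvd_mul_left N c) (ZMod N)) (T.1 1 1)]
        exact hT 1 1
      · rw [← hp1, ← hp2]
        have key : ((T.1 0 0 * T.1 1 1 : ℤ) : ZMod (c*N)) = ((1 + R.1 0 1 * (c:ℤ) : ℤ) : ZMod (c*N)) := by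
          rw [ZMod.intCast_eq_intCast_iff]
          refine Int.modEq_iff_dvd.mpr ⟨s, ?_⟩
          push_cast
          linear_combination (c:ℤ) * hs - hdet
        push_cast at key ⊢
        exact key
end

section
/- Assume m > 2a + 2 with a ≥ 0 real and m an integer. Then for any β ∈ ℝ and U > 0, ∫₁^∞ (U + X)^{1+2a−m} Σ_{1 ≤ j ≤ X} min(1/j², 1/(X j ⟨jβ⟩)) dX ≪_{m,a} (U + 1)^{2+2a−m} Σ_{j=1}^∞ min(1/j², 1/(U j ⟨jβ⟩)) · (1 + log⁺(U⟨jβ⟩/j)). -/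
open Real MeasureTheory

/-- Distance from `x` to the nearest integer. -/
noncomputable def nint (x : ℝ) : ℝ := |x - (round x : ℤ)|

/-- `log⁺ x = max (log x) 0`. -/
noncomputable def logp (x : ℝ) : ℝ := max (Real.log x) 0

/-- `min(1/j², 1/(X j ⟨jb⟩))`, interpreted as `1/j²` when `⟨jb⟩ = 0`
(the term `1/(X j ⟨jb⟩)` is then `+∞`). -/
noncomputable def mfun (X b : ℝ) (j : ℕ) : ℝ :=
  if nint ((j : ℝ) * b) = 0 then 1 / (j : ℝ) ^ 2
  else min (1 / (j : ℝ) ^ 2) (1 / (X * (j : ℝ) * nint ((j : ℝ) * b)))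

open Set Filter

lemma nint_nonneg (x : ℝ) : 0 ≤ nint x := abs_nonneg _

lemma nint_le_half (x : ℝ) : nint x ≤ 1 / 2 := abs_sub_round x

lemma logp_nonneg (x : ℝ) : 0 ≤ logp x := le_max_right _ _

lemma logp_mono {x y : ℝ} (hx : 0 ≤ x) (h : x ≤ y) : logp x ≤ logp y := by
  rcases eq_or_lt_of_le hx with h0 | h0
  · have : logp x = 0 := by simp [logp, ← h0]
    rw [this]; exact logp_nonneg y
  · exact max_le_max (Real.log_le_log h0 h) le_rfl

lemma mfun_nonneg {X : ℝ} (hX : 0 ≤ X) (b : ℝ) (n : ℕ) : 0 ≤ mfun X b n := by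
  unfold mfun; split
  · positivity
  · refine le_min (by positivity) ?_
    have := nint_nonneg ((n : ℝ) * b)
    positivity

lemma mfun_le_one_div_sq (X b : ℝ) (n : ℕ) : mfun X b n ≤ 1 / (n : ℝ) ^ 2 := by
  unfold mfun; split
  exacts [le_rfl, min_le_left _ _]

lemma integrableOn_shift_rpow {U r T : ℝ} (hU : 0 ≤ U) (hr : r < -1) (hT : 0 < T) :
    IntegrableOn (fun X => (U + X) ^ r) (Ioi T) := by
  have hpos : ∀ x, x ∈ Ici T → 0 < U + x := fun x hx => by
    have : T ≤ x := hx
    linarith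
  have hderiv : ∀ x ∈ Ici T, HasDerivAt (fun X : ℝ => (U + X) ^ (r + 1) / (r + 1))
      ((U + x) ^ r) x := by
    intro x hx
    have h1 : HasDerivAt (fun X : ℝ => U + X) 1 x := (hasDerivAt_id x).const_add U
    have h2 : HasDerivAt (fun y : ℝ => y ^ (r + 1)) ((r + 1) * (U + x) ^ r) (U + x) := by
      have := Real.hasDerivAt_rpow_const (x := U + x) (p := r + 1)
        (Or.inl (hpos x hx).ne')
      simpa using this
    have := (h2.comp x h1).div_const (r + 1)
    have hr1 : r + 1 ≠ 0 := by linarith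
    convert this using 1
    · rfl
    · rfl
    · rfl
    · field_simp
  refine integrableOn_Ioi_deriv_of_nonneg' hderiv
    (fun x hx => Real.rpow_nonneg (hpos x (mem_Ici.2 (le_of_lt hx))).le r) (l := 0) ?_
  have h0 : Tendsto (fun X : ℝ => (U + X) ^ (r + 1)) atTop (nhds 0) := by
    have h1 : Tendsto (fun X : ℝ => U + X) atTop atTop :=
      tendsto_atTop_add_const_left _ U tendsto_id
    have h2 : Tendsto (fun y : ℝ => y ^ (-(-(r + 1)))) atTop (nhds 0) :=
      tendsto_rpow_neg_atTop (by linarith)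
    simpa [Function.comp_def] using h2.comp h1
  simpa using h0.div_const (r + 1)

lemma integral_shift_rpow {U r T : ℝ} (hU : 0 ≤ U) (hr : r < -1) (hT : 0 < T) :
    ∫ X in Ioi T, (U + X) ^ r = (U + T) ^ (r + 1) / (-(r + 1)) := by
  have hpos : ∀ x, x ∈ Ici T → 0 < U + x := fun x hx => by
    have : T ≤ x := hx
    linarith
  have hderiv : ∀ x ∈ Ici T, HasDerivAt (fun X : ℝ => (U + X) ^ (r + 1) / (r + 1))
      ((U + x) ^ r) x := by
    intro x hx
    have h1 : HasDerivAt (fun X : ℝ => U + X) 1 x := (hasDerivAt_id x).const_add U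
    have h2 : HasDerivAt (fun y : ℝ => y ^ (r + 1)) ((r + 1) * (U + x) ^ r) (U + x) := by
      have := Real.hasDerivAt_rpow_const (x := U + x) (p := r + 1)
        (Or.inl (hpos x hx).ne')
      simpa using this
    have := (h2.comp x h1).div_const (r + 1)
    have hr1 : r + 1 ≠ 0 := by linarith
    convert this using 1
    · rfl
    · rfl
    · rfl
    · field_simp
  have h0 : Tendsto (fun X : ℝ => (U + X) ^ (r + 1) / (r + 1)) atTop (nhds 0) := by
    have h1 : Tendsto (fun X : ℝ => U + X) atTop atTop :=
      tendsto_atTop_add_const_left _ U tendsto_id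
    have h2 : Tendsto (fun y : ℝ => y ^ (-(-(r + 1)))) atTop (nhds 0) :=
      tendsto_rpow_neg_atTop (by linarith)
    have := (h2.comp h1).div_const (r + 1)
    simpa using this
  rw [integral_Ioi_of_hasDerivAt_of_tendsto' hderiv (integrableOn_shift_rpow hU hr hT) h0]
  rw [zero_sub, div_neg]

lemma measurable_shift_rpow (U r : ℝ) : Measurable (fun X : ℝ => (U + X) ^ r) := by
  have h0 : Measurable fun y : ℝ => y ^ r := by measurability
  exact h0.comp (measurable_const.add measurable_id)

lemma measurable_shift_rpow_div (U r : ℝ) : Measurable (fun X : ℝ => (U + X) ^ r / X) :=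
  (measurable_shift_rpow U r).div measurable_id

lemma integrableOn_B {U r T : ℝ} (hU : 0 < U) (hr : r < -1) (hT : 1 ≤ T) :
    IntegrableOn (fun X => (U + X) ^ r / X) (Ioi T) := by
  set M := max T U with hM
  have hTM : T ≤ M := le_max_left _ _
  have hUM : U ≤ M := le_max_right _ _
  have hT0 : (0:ℝ) < T := by linarith
  have hM0 : (0:ℝ) < M := lt_of_lt_of_le hT0 hTM
  have hmeas := measurable_shift_rpow_div U r
  have h1 : IntegrableOn (fun X => (U + X) ^ r / X) (Ioc T M) := by
    refine Integrable.mono' (g := fun _ => (U + T) ^ r)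
      (integrableOn_const measure_Ioc_lt_top.ne) hmeas.aestronglyMeasurable ?_
    filter_upwards [ae_restrict_mem measurableSet_Ioc] with X hX
    have hX1 : T < X := hX.1
    have hUX : (0:ℝ) < U + X := by linarith
    rw [Real.norm_eq_abs, abs_of_nonneg (div_nonneg (Real.rpow_nonneg hUX.le r) (by linarith))]
    calc (U + X) ^ r / X ≤ (U + X) ^ r / 1 :=
          div_le_div_of_nonneg_left (Real.rpow_nonneg hUX.le r) one_pos (by linarith)
      _ = (U + X) ^ r := div_one _
      _ ≤ (U + T) ^ r := Real.rpow_le_rpow_of_nonpos (by linarith) (by linarith) (by linarith)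
  have h2 : IntegrableOn (fun X => (U + X) ^ r / X) (Ioi M) := by
    refine Integrable.mono' (g := fun X => 2 * (U + X) ^ (r - 1))
      ((integrableOn_shift_rpow hU.le (by linarith) hM0).const_mul 2)
      hmeas.aestronglyMeasurable ?_
    filter_upwards [ae_restrict_mem measurableSet_Ioi] with X hX
    have hX1 : M < X := hX
    have hUX : (0:ℝ) < U + X := by linarith
    rw [Real.norm_eq_abs, abs_of_nonneg (div_nonneg (Real.rpow_nonneg hUX.le r) (by linarith))]
    calc (U + X) ^ r / X ≤ (U + X) ^ r / ((U + X) / 2) :=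
          div_le_div_of_nonneg_left (Real.rpow_nonneg hUX.le r) (by linarith) (by linarith)
      _ = 2 * (U + X) ^ (r - 1) := by
          rw [Real.rpow_sub_one hUX.ne']; field_simp
  rw [← Ioc_union_Ioi_eq_Ioi hTM]
  exact h1.union h2

lemma integral_B_le {U r T : ℝ} (hU : 0 < U) (hr : r < -1) (hT : 1 ≤ T) :
    ∫ X in Ioi T, (U + X) ^ r / X ≤ (U + T) ^ r * (logp (U / T) + 2 / (-r)) := by
  set M := max T U with hM
  have hTM : T ≤ M := le_max_left _ _
  have hUM : U ≤ M := le_max_right _ _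
  have hT0 : (0:ℝ) < T := by linarith
  have hM0 : (0:ℝ) < M := lt_of_lt_of_le hT0 hTM
  have hUT : (0:ℝ) < U + T := by linarith
  have hint := integrableOn_B hU hr hT
  have hsub1 : Ioc T M ⊆ Ioi T := by
    rw [← Ioc_union_Ioi_eq_Ioi hTM]; exact subset_union_left
  have hsub2 : Ioi M ⊆ Ioi T := by
    rw [← Ioc_union_Ioi_eq_Ioi hTM]; exact subset_union_right
  have hsplit : ∫ X in Ioi T, (U + X) ^ r / X =
      (∫ X in Ioc T M, (U + X) ^ r / X) + ∫ X in Ioi M, (U + X) ^ r / X := by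
    rw [← setIntegral_union (Ioc_disjoint_Ioi le_rfl) measurableSet_Ioi
      (hint.mono_set hsub1) (hint.mono_set hsub2), Ioc_union_Ioi_eq_Ioi hTM]
  have hinv : IntegrableOn (fun X : ℝ => (U + T) ^ r * X⁻¹) (Ioc T M) := by
    refine Integrable.const_mul ?_ _
    have hc : ContinuousOn (fun X : ℝ => X⁻¹) (Icc T M) := by
      apply ContinuousOn.inv₀ continuousOn_id
      intro x hx; exact (lt_of_lt_of_le hT0 hx.1).ne'
    exact (hc.integrableOn_Icc).mono_set Ioc_subset_Icc_self
  have h1 : ∫ X in Ioc T M, (U + X) ^ r / X ≤ (U + T) ^ r * logp (U / T) := by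
    calc ∫ X in Ioc T M, (U + X) ^ r / X ≤ ∫ X in Ioc T M, (U + T) ^ r * X⁻¹ := by
          refine setIntegral_mono_on (hint.mono_set hsub1) hinv measurableSet_Ioc ?_
          intro X hX
          have hX1 : T < X := hX.1
          have hUX : (0:ℝ) < U + X := by linarith
          rw [div_eq_mul_inv]
          exact mul_le_mul_of_nonneg_right
            (Real.rpow_le_rpow_of_nonpos hUT (by linarith) (by linarith))
            (inv_nonneg.2 (by linarith))
      _ = (U + T) ^ r * (Real.log M - Real.log T) := by
          rw [integral_const_mul, ← intervalIntegral.integral_of_le hTM,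
            integral_inv (notMem_uIcc_of_lt hT0 hM0),
            Real.log_div hM0.ne' hT0.ne']
      _ ≤ (U + T) ^ r * logp (U / T) := by
          apply mul_le_mul_of_nonneg_left ?_ (Real.rpow_nonneg hUT.le r)
          rcases le_or_gt U T with h | h
          · have hMT : M = T := max_eq_left h
            rw [hMT, sub_self]; exact logp_nonneg _
          · have hMU : M = U := max_eq_right h.le
            rw [hMU, ← Real.log_div (by linarith) hT0.ne']
            exact le_max_left _ _
  have h2 : ∫ X in Ioi M, (U + X) ^ r / X ≤ (U + T) ^ r * (2 / (-r)) := by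
    calc ∫ X in Ioi M, (U + X) ^ r / X ≤ ∫ X in Ioi M, 2 * (U + X) ^ (r - 1) := by
          refine setIntegral_mono_on (hint.mono_set hsub2)
            ((integrableOn_shift_rpow hU.le (by linarith) hM0).const_mul 2)
            measurableSet_Ioi ?_
          intro X hX
          have hX1 : M < X := hX
          have hUX : (0:ℝ) < U + X := by linarith
          calc (U + X) ^ r / X ≤ (U + X) ^ r / ((U + X) / 2) :=
                div_le_div_of_nonneg_left (Real.rpow_nonneg hUX.le r) (by linarith) (by linarith)
            _ = 2 * (U + X) ^ (r - 1) := by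
                rw [Real.rpow_sub_one hUX.ne']; field_simp
      _ = 2 * ((U + M) ^ (r - 1 + 1) / (-(r - 1 + 1))) := by
          rw [integral_const_mul, integral_shift_rpow hU.le (by linarith) hM0]
      _ ≤ (U + T) ^ r * (2 / (-r)) := by
          have hr1 : r - 1 + 1 = r := by ring
          rw [hr1]
          have hUM' : (U + M) ^ r ≤ (U + T) ^ r :=
            Real.rpow_le_rpow_of_nonpos hUT (by linarith) (by linarith)
          have hrpos : (0:ℝ) < -r := by linarith
          rw [div_eq_mul_inv, div_eq_mul_inv]
          calc 2 * ((U + M) ^ r * (-r)⁻¹) ≤ 2 * ((U + T) ^ r * (-r)⁻¹) := by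
                apply mul_le_mul_of_nonneg_left
                  (mul_le_mul_of_nonneg_right hUM' (by positivity))
                norm_num
            _ = (U + T) ^ r * (2 * (-r)⁻¹) := by ring
  rw [hsplit, mul_add]
  exact add_le_add h1 h2

noncomputable def Kc (r : ℝ) : ℝ :=
  1 / (-(r + 1)) + (1 + 2 / (-r)) + (2:ℝ) ^ (-(r + 1)) * (2 / (-r))

lemma Kc_pos {r : ℝ} (hr : r < -1) : 0 < Kc r := by
  have h1 : (0:ℝ) < -(r + 1) := by linarith
  have h2 : (0:ℝ) < -r := by linarith
  have h3 : (0:ℝ) < (2:ℝ) ^ (-(r + 1)) := Real.rpow_pos_of_pos two_pos _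
  unfold Kc
  positivity

lemma measurable_mfun (b : ℝ) (n : ℕ) : Measurable (fun X => mfun X b n) := by
  unfold mfun
  by_cases h : nint ((n : ℝ) * b) = 0
  · simp only [h, if_true]; exact measurable_const
  · simp only [h, if_false, one_div]
    exact measurable_const.min (((measurable_id.mul_const _).mul_const _).inv)

lemma key_integrable {r : ℝ} (hr : r < -1) {U : ℝ} (hU : 0 < U) (b : ℝ) (n : ℕ) :
    IntegrableOn (fun X => (U + X) ^ r * mfun X b n) (Ioi 1) := by
  refine Integrable.mono' (g := fun X => (U + X) ^ r * (1 / (n:ℝ) ^ 2))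
    ((integrableOn_shift_rpow hU.le hr one_pos).mul_const _)
    ((measurable_shift_rpow U r).mul (measurable_mfun b n)).aestronglyMeasurable ?_
  filter_upwards [ae_restrict_mem measurableSet_Ioi] with X hX
  have hX1 : (1:ℝ) < X := hX
  have hUX : (0:ℝ) < U + X := by linarith
  have h0 := mfun_nonneg (by linarith : (0:ℝ) ≤ X) b n
  rw [Real.norm_eq_abs, abs_of_nonneg (mul_nonneg (Real.rpow_nonneg hUX.le r) h0)]
  exact mul_le_mul_of_nonneg_left (mfun_le_one_div_sq X b n) (Real.rpow_nonneg hUX.le r)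

lemma split_Ioi {f : ℝ → ℝ} {T : ℝ} (hT : 1 ≤ T) (hint : IntegrableOn f (Ioi 1)) :
    ∫ X in Ioi 1, f X = (∫ X in Ioc 1 T, f X) + ∫ X in Ioi T, f X := by
  rw [← setIntegral_union (Ioc_disjoint_Ioi le_rfl) measurableSet_Ioi
    (hint.mono_set (by rw [← Ioc_union_Ioi_eq_Ioi hT]; exact subset_union_left))
    (hint.mono_set (by rw [← Ioc_union_Ioi_eq_Ioi hT]; exact subset_union_right)),
    Ioc_union_Ioi_eq_Ioi hT]

set_option maxHeartbeats 1000000 in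
lemma key {r : ℝ} (hr : r < -1) {U : ℝ} (hU : 0 < U) (b : ℝ) (n : ℕ) (hn : 1 ≤ n) :
    ∫ X in Ioi 1, (U + X) ^ r * mfun X b n ≤
      Kc r * ((U + 1) ^ (r + 1) *
        (mfun U b n * (1 + logp (U * nint ((n : ℝ) * b) / (n : ℝ))))) := by
  have hn1 : (1:ℝ) ≤ (n:ℝ) := by exact_mod_cast hn
  have hn0 : (0:ℝ) < (n:ℝ) := by linarith
  have hU1 : (0:ℝ) < U + 1 := by linarith
  have hr1 : (0:ℝ) < -(r + 1) := by linarith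
  have hr2 : (0:ℝ) < -r := by linarith
  have hA : (0:ℝ) < (U + 1) ^ (r + 1) := Real.rpow_pos_of_pos hU1 _
  have hint := key_integrable hr hU b n
  have hKpos := Kc_pos hr
  have hL0 : 0 ≤ logp (U * nint ((n : ℝ) * b) / (n : ℝ)) := logp_nonneg _
  set L := logp (U * nint ((n : ℝ) * b) / (n : ℝ)) with hL
  clear_value L
  -- value of the basic integral
  have hbase : ∫ X in Ioi 1, (U + X) ^ r * (1 / (n:ℝ) ^ 2)
      = (U + 1) ^ (r + 1) / (-(r + 1)) * (1 / (n:ℝ) ^ 2) := by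
    rw [integral_mul_const, integral_shift_rpow hU.le hr one_pos]
  by_cases hδ : nint ((n : ℝ) * b) = 0
  · -- zero distance case
    have hmf : ∀ X : ℝ, mfun X b n = 1 / (n:ℝ) ^ 2 := fun X => by
      unfold mfun; rw [if_pos hδ]
    simp only [hmf]
    rw [hbase]
    have hKK : 1 / (-(r + 1)) ≤ Kc r := by
      unfold Kc
      have h3 : (0:ℝ) < (2:ℝ) ^ (-(r + 1)) := Real.rpow_pos_of_pos two_pos _
      have h4 : (0:ℝ) < 2 / (-r) := by positivity
      have h5 : (0:ℝ) < (2:ℝ) ^ (-(r + 1)) * (2 / (-r)) := mul_pos h3 h4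
      linarith
    have hB : (0:ℝ) < 1 / (n:ℝ) ^ 2 := by positivity
    calc (U + 1) ^ (r + 1) / (-(r + 1)) * (1 / (n:ℝ) ^ 2)
        = (1 / (-(r + 1))) * ((U + 1) ^ (r + 1) * (1 / (n:ℝ) ^ 2)) := by ring
      _ ≤ Kc r * ((U + 1) ^ (r + 1) * (1 / (n:ℝ) ^ 2)) :=
          mul_le_mul_of_nonneg_right hKK (by positivity)
      _ ≤ Kc r * ((U + 1) ^ (r + 1) * (1 / (n:ℝ) ^ 2 * (1 + L))) := by
          apply mul_le_mul_of_nonneg_left ?_ hKpos.le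
          apply mul_le_mul_of_nonneg_left ?_ hA.le
          nlinarith
  · -- positive distance case
    obtain ⟨δ, hδdef⟩ : ∃ d, nint ((n : ℝ) * b) = d := ⟨_, rfl⟩
    rw [hδdef] at hδ hL
    have hδpos : 0 < δ := (hδdef ▸ nint_nonneg ((n:ℝ)*b)).lt_of_ne (Ne.symm hδ)
    have hδne : δ ≠ 0 := hδ
    have hnne : ((n:ℝ)) ≠ 0 := hn0.ne'
    have hδhalf : δ ≤ 1 / 2 := hδdef ▸ nint_le_half ((n:ℝ)*b)
    set T := (n : ℝ) / δ with hT
    clear_value T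
    have hT2 : (2:ℝ) ≤ T := by
      rw [hT, le_div_iff₀ hδpos]; linarith
    have hT1 : (1:ℝ) ≤ T := by linarith
    have hT0 : (0:ℝ) < T := by linarith
    have hmf : ∀ X : ℝ, mfun X b n = min (1 / (n:ℝ) ^ 2) (1 / (X * n * δ)) := fun X => by
      unfold mfun; rw [hδdef, if_neg hδ]
    have hUT : (0:ℝ) < U + T := by linarith
    -- split the integral
    have hsplit := split_Ioi hT1 hint
    -- bound on Ioi T
    have hI2 : ∫ X in Ioi T, (U + X) ^ r * mfun X b n ≤
        (1 / ((n:ℝ) * δ)) * ((U + T) ^ r * (logp (U * δ / n) + 2 / (-r))) := by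
      have hUdT : U / T = U * δ / n := by
        rw [hT, div_div_eq_mul_div]
      calc ∫ X in Ioi T, (U + X) ^ r * mfun X b n
          ≤ ∫ X in Ioi T, (1 / ((n:ℝ) * δ)) * ((U + X) ^ r / X) := by
            refine setIntegral_mono_on (hint.mono_set
              (fun x hx => lt_of_le_of_lt hT1 hx)) ((integrableOn_B hU hr hT1).const_mul _)
              measurableSet_Ioi ?_
            intro X hX
            have hXT : T < X := hX
            have hX0 : (0:ℝ) < X := by linarith
            have hUX : (0:ℝ) < U + X := by linarith
            rw [hmf X]
            calc (U + X) ^ r * min (1 / (n:ℝ) ^ 2) (1 / (X * n * δ))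
                ≤ (U + X) ^ r * (1 / (X * n * δ)) :=
                  mul_le_mul_of_nonneg_left (min_le_right _ _) (Real.rpow_nonneg hUX.le r)
              _ = (1 / ((n:ℝ) * δ)) * ((U + X) ^ r / X) := by
                  ring
        _ = (1 / ((n:ℝ) * δ)) * ∫ X in Ioi T, (U + X) ^ r / X := integral_const_mul _ _
        _ ≤ (1 / ((n:ℝ) * δ)) * ((U + T) ^ r * (logp (U / T) + 2 / (-r))) := by
            apply mul_le_mul_of_nonneg_left (integral_B_le hU hr hT1) (by positivity)
        _ = (1 / ((n:ℝ) * δ)) * ((U + T) ^ r * (logp (U * δ / n) + 2 / (-r))) := by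
            rw [hUdT]
    rw [← hL] at hI2
    rw [hsplit]
    by_cases hcase : (n:ℝ) ≤ U * δ
    · -- the min is 1/(U n δ)
      have hmin : mfun U b n = 1 / (U * n * δ) := by
        rw [hmf U]
        apply min_eq_right
        apply one_div_le_one_div_of_le (by positivity)
        calc (n:ℝ) ^ 2 = (n:ℝ) * n := sq (n:ℝ)
          _ ≤ (n:ℝ) * (U * δ) := mul_le_mul_of_nonneg_left hcase hn0.le
          _ = U * n * δ := by ring
      -- I1 via measure bound
      have hI1 : ∫ X in Ioc 1 T, (U + X) ^ r * mfun X b n ≤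
          (U + 1) ^ r * (1 / ((n:ℝ) * δ)) := by
        calc ∫ X in Ioc 1 T, (U + X) ^ r * mfun X b n
            ≤ ∫ _X in Ioc 1 T, (U + 1) ^ r * (1 / (n:ℝ) ^ 2) := by
              refine setIntegral_mono_on (hint.mono_set (fun x hx => hx.1))
                (integrableOn_const measure_Ioc_lt_top.ne) measurableSet_Ioc ?_
              intro X hX
              have hX1 : (1:ℝ) < X := hX.1
              have hUX : (0:ℝ) < U + X := by linarith
              apply mul_le_mul (Real.rpow_le_rpow_of_nonpos hU1 (by linarith) (by linarith))
                (mfun_le_one_div_sq X b n) (mfun_nonneg (by linarith) b n)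
                (Real.rpow_nonneg hU1.le r)
          _ = (volume (Ioc (1:ℝ) T)).toReal * ((U + 1) ^ r * (1 / (n:ℝ) ^ 2)) := by
              rw [setIntegral_const]; rfl
          _ ≤ T * ((U + 1) ^ r * (1 / (n:ℝ) ^ 2)) := by
              apply mul_le_mul_of_nonneg_right ?_ (by positivity)
              rw [Real.volume_Ioc, ENNReal.toReal_ofReal (by linarith)]
              linarith
          _ = (U + 1) ^ r * (1 / ((n:ℝ) * δ)) := by
              rw [hT]; field_simp
      have hpow : (U + 1) ^ (r + 1) = (U + 1) ^ r * (U + 1) := Real.rpow_add_one hU1.ne' r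
      have hUTle : (U + T) ^ r ≤ (U + 1) ^ r :=
        Real.rpow_le_rpow_of_nonpos hU1 (by linarith) (by linarith)
      set Q := (U + 1) ^ r with hQ
      have hQ0 : (0:ℝ) < Q := Real.rpow_pos_of_pos hU1 r
      clear_value Q
      have hE : (0:ℝ) < 2 / (-r) := by positivity
      have hKE : 1 + 2 / (-r) ≤ Kc r := by
        unfold Kc
        have h3 : (0:ℝ) < (2:ℝ) ^ (-(r + 1)) := Real.rpow_pos_of_pos two_pos _
        have h4 : (0:ℝ) < 1 / (-(r + 1)) := by positivity
        have h5 : (0:ℝ) < (2:ℝ) ^ (-(r + 1)) * (2 / (-r)) := by positivity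
        linarith
      rw [hmin, hpow]
      have hc : (0:ℝ) < 1 / ((n:ℝ) * δ) := by positivity
      have hUne : U ≠ 0 := ne_of_gt hU
      have harith : (1 + (L + 2 / (-r))) * U ≤ Kc r * (U + 1) * (1 + L) := by
        nlinarith [mul_nonneg hL0 hE.le, mul_nonneg hU.le (mul_nonneg hL0 hE.le),
          mul_le_mul_of_nonneg_right hKE (by positivity : (0:ℝ) ≤ (U + 1) * (1 + L))]
      have harith' : 1 + (L + 2 / (-r)) ≤ Kc r * (U + 1) * (1 + L) / U := by
        rw [le_div_iff₀ hU]; exact harith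
      calc (∫ X in Ioc 1 T, (U + X) ^ r * mfun X b n) + ∫ X in Ioi T, (U + X) ^ r * mfun X b n
          ≤ Q * (1 / ((n:ℝ) * δ)) + (1 / ((n:ℝ) * δ)) * (Q * (L + 2 / (-r))) := by
            apply add_le_add hI1
            calc ∫ X in Ioi T, (U + X) ^ r * mfun X b n
                ≤ (1 / ((n:ℝ) * δ)) * ((U + T) ^ r * (L + 2 / (-r))) := hI2
              _ ≤ (1 / ((n:ℝ) * δ)) * (Q * (L + 2 / (-r))) := by
                  apply mul_le_mul_of_nonneg_left ?_ hc.le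
                  apply mul_le_mul_of_nonneg_right hUTle (by positivity)
        _ = (Q * (1 / ((n:ℝ) * δ))) * (1 + (L + 2 / (-r))) := by ring
        _ ≤ (Q * (1 / ((n:ℝ) * δ))) * (Kc r * (U + 1) * (1 + L) / U) :=
            mul_le_mul_of_nonneg_left harith' (by positivity)
        _ = Kc r * (Q * (U + 1) * (1 / (U * (n:ℝ) * δ) * (1 + L))) := by ring
    · -- the min is 1/n²
      push_neg at hcase
      have hmin : mfun U b n = 1 / (n:ℝ) ^ 2 := by
        rw [hmf U]
        apply min_eq_left
        apply one_div_le_one_div_of_le (by positivity)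
        calc U * (n:ℝ) * δ = (n:ℝ) * (U * δ) := by ring
          _ ≤ (n:ℝ) * (n:ℝ) := mul_le_mul_of_nonneg_left hcase.le hn0.le
          _ = (n:ℝ) ^ 2 := (sq (n:ℝ)).symm
      have hLzero : L = 0 := by
        rw [hL]
        apply max_eq_right
        apply Real.log_nonpos (by positivity)
        rw [div_le_one hn0]
        exact hcase.le
      have hI1 : ∫ X in Ioc 1 T, (U + X) ^ r * mfun X b n ≤
          (U + 1) ^ (r + 1) / (-(r + 1)) * (1 / (n:ℝ) ^ 2) := by
        rw [← hbase]
        calc ∫ X in Ioc 1 T, (U + X) ^ r * mfun X b n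
            ≤ ∫ X in Ioc 1 T, (U + X) ^ r * (1 / (n:ℝ) ^ 2) := by
              refine setIntegral_mono_on (hint.mono_set (fun x hx => hx.1))
                (IntegrableOn.mono_set
                  ((integrableOn_shift_rpow hU.le hr one_pos).mul_const _)
                  (fun x hx => hx.1)) measurableSet_Ioc ?_
              intro X hX
              have hX1 : (1:ℝ) < X := hX.1
              have hUX : (0:ℝ) < U + X := by linarith
              exact mul_le_mul_of_nonneg_left (mfun_le_one_div_sq X b n)
                (Real.rpow_nonneg hUX.le r)
          _ ≤ ∫ X in Ioi 1, (U + X) ^ r * (1 / (n:ℝ) ^ 2) := by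
              apply setIntegral_mono_set
                ((integrableOn_shift_rpow hU.le hr one_pos).mul_const _)
              · filter_upwards [ae_restrict_mem measurableSet_Ioi] with X hX
                have hX1 : (1:ℝ) < X := hX
                have hUX : (0:ℝ) < U + X := by linarith
                positivity
              · exact HasSubset.Subset.eventuallyLE (fun x hx => hx.1)
      -- second piece
      have hTU : U < T := by
        rw [hT, lt_div_iff₀ hδpos]; exact hcase
      have hI2' : ∫ X in Ioi T, (U + X) ^ r * mfun X b n ≤
          (1 / (n:ℝ) ^ 2) * ((U + 1) ^ (r + 1) * ((2:ℝ) ^ (-(r + 1)) * (2 / (-r)))) := by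
        have hTle : (U + T) ^ r ≤ T ^ r :=
          Real.rpow_le_rpow_of_nonpos hT0 (by linarith) (by linarith)
        have hhalf : (U + 1) / 2 ≤ T := by linarith
        have hhalfpos : (0:ℝ) < (U + 1) / 2 := by linarith
        have hTpow : T ^ (r + 1) ≤ ((U + 1) / 2) ^ (r + 1) :=
          Real.rpow_le_rpow_of_nonpos hhalfpos hhalf (by linarith)
        have hdivpow : ((U + 1) / 2) ^ (r + 1) = (U + 1) ^ (r + 1) * (2:ℝ) ^ (-(r + 1)) := by
          rw [Real.div_rpow hU1.le (by norm_num : (0:ℝ) ≤ 2), Real.rpow_neg (by norm_num)]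
          ring
        calc ∫ X in Ioi T, (U + X) ^ r * mfun X b n
            ≤ (1 / ((n:ℝ) * δ)) * ((U + T) ^ r * (L + 2 / (-r))) := hI2
          _ = (1 / ((n:ℝ) * δ)) * ((U + T) ^ r * (2 / (-r))) := by
              rw [hLzero, zero_add]
          _ ≤ (1 / ((n:ℝ) * δ)) * (T ^ r * (2 / (-r))) := by
              apply mul_le_mul_of_nonneg_left
                (mul_le_mul_of_nonneg_right hTle (by positivity)) (by positivity)
          _ = (1 / (n:ℝ) ^ 2) * (T ^ (r + 1) * (2 / (-r))) := by
              have hTT : (1:ℝ) / ((n:ℝ) * δ) = (1 / (n:ℝ) ^ 2) * T := by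
                rw [hT]; field_simp
              rw [Real.rpow_add_one hT0.ne' r, hTT]
              ring
          _ ≤ (1 / (n:ℝ) ^ 2) * (((U + 1) / 2) ^ (r + 1) * (2 / (-r))) := by
              apply mul_le_mul_of_nonneg_left
                (mul_le_mul_of_nonneg_right hTpow (by positivity)) (by positivity)
          _ = (1 / (n:ℝ) ^ 2) * ((U + 1) ^ (r + 1) * ((2:ℝ) ^ (-(r + 1)) * (2 / (-r)))) := by
              rw [hdivpow]; ring
      rw [hmin, hLzero]
      have hKK : 1 / (-(r + 1)) + (2:ℝ) ^ (-(r + 1)) * (2 / (-r)) ≤ Kc r := by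
        unfold Kc
        have h4 : (0:ℝ) < 2 / (-r) := by positivity
        linarith
      calc (∫ X in Ioc 1 T, (U + X) ^ r * mfun X b n) + ∫ X in Ioi T, (U + X) ^ r * mfun X b n
          ≤ (U + 1) ^ (r + 1) / (-(r + 1)) * (1 / (n:ℝ) ^ 2) +
            (1 / (n:ℝ) ^ 2) * ((U + 1) ^ (r + 1) * ((2:ℝ) ^ (-(r + 1)) * (2 / (-r)))) :=
            add_le_add hI1 hI2'
        _ = (1 / (-(r + 1)) + (2:ℝ) ^ (-(r + 1)) * (2 / (-r))) *
            ((U + 1) ^ (r + 1) * (1 / (n:ℝ) ^ 2)) := by ring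
        _ ≤ Kc r * ((U + 1) ^ (r + 1) * (1 / (n:ℝ) ^ 2)) :=
            mul_le_mul_of_nonneg_right hKK (by positivity)
        _ = Kc r * ((U + 1) ^ (r + 1) * (1 / (n:ℝ) ^ 2 * (1 + 0))) := by ring

lemma sum_Icc_reindex (f : ℕ → ℝ) (N : ℕ) :
    ∑ j ∈ Finset.Icc 1 N, f j = ∑ j ∈ Finset.range N, f (j + 1) := by
  induction N with
  | zero => simp
  | succ n ih => rw [Finset.sum_Icc_succ_top (by omega), ih, Finset.sum_range_succ]

set_option maxHeartbeats 1000000 in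
theorem stmt15 (a : ℝ) (ha : 0 ≤ a) (m : ℤ) (hm : 2 * a + 2 < (m : ℝ)) :
    ∃ C : ℝ, 0 < C ∧ ∀ (b U : ℝ), 0 < U →
      (∫ X in Set.Ioi (1 : ℝ),
          (U + X) ^ (1 + 2 * a - (m : ℝ)) * ∑ j ∈ Finset.Icc 1 ⌊X⌋₊, mfun X b j) ≤
        C * (U + 1) ^ (2 + 2 * a - (m : ℝ)) *
          ∑' j : ℕ, mfun U b (j + 1) *
            (1 + logp (U * nint (((j : ℝ) + 1) * b) / ((j : ℝ) + 1))) := by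
  set r := 1 + 2 * a - (m : ℝ) with hrdef
  have hr : r < -1 := by rw [hrdef]; linarith
  refine ⟨Kc r, Kc_pos hr, ?_⟩
  intro b U hU
  have hU1 : (0:ℝ) < U + 1 := by linarith
  have hA : (0:ℝ) < (U + 1) ^ (r + 1) := Real.rpow_pos_of_pos hU1 _
  have hexp : 2 + 2 * a - (m:ℝ) = r + 1 := by rw [hrdef]; ring
  rw [hexp]
  -- notation
  set t : ℕ → ℝ := fun j => mfun U b (j + 1) *
    (1 + logp (U * nint (((j : ℝ) + 1) * b) / ((j : ℝ) + 1))) with ht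
  have htnn : ∀ j, 0 ≤ t j := by
    intro j
    have hl := logp_nonneg (U * nint (((j : ℝ) + 1) * b) / ((j : ℝ) + 1))
    exact mul_nonneg (mfun_nonneg hU.le b (j + 1)) (by linarith)
  -- per-term bound in the goal's cast normal form
  have hkey : ∀ j : ℕ, ∫ X in Ioi 1, (U + X) ^ r * mfun X b (j + 1) ≤
      Kc r * ((U + 1) ^ (r + 1) * t j) := by
    intro j
    have h := key hr hU b (j + 1) (by omega)
    rw [ht]
    push_cast at h ⊢
    exact h
  -- summability of t
  have hsum2 : Summable (fun j : ℕ => 1 / ((j:ℝ) + 1) ^ 2) := by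
    have h1 : Summable (fun n : ℕ => 1 / (n : ℝ) ^ 2) :=
      Real.summable_one_div_nat_pow.mpr one_lt_two
    have h2 := (summable_nat_add_iff 1).mpr h1
    refine Summable.congr h2 (fun j => by push_cast; ring_nf)
  have hsumt : Summable t := by
    refine Summable.of_nonneg_of_le htnn ?_ (hsum2.mul_left (1 + logp U))
    intro j
    have hj1 : (1:ℝ) ≤ (j:ℝ) + 1 := by
      have := Nat.cast_nonneg (α := ℝ) j
      linarith
    have hδh := nint_le_half (((j : ℝ) + 1) * b)
    have hδn := nint_nonneg (((j : ℝ) + 1) * b)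
    have harg : U * nint (((j : ℝ) + 1) * b) / ((j : ℝ) + 1) ≤ U := by
      calc U * nint (((j : ℝ) + 1) * b) / ((j : ℝ) + 1)
          ≤ U * nint (((j : ℝ) + 1) * b) / 1 :=
            div_le_div_of_nonneg_left (by positivity) one_pos hj1
        _ = U * nint (((j : ℝ) + 1) * b) := div_one _
        _ ≤ U := by nlinarith
    have hlog : logp (U * nint (((j : ℝ) + 1) * b) / ((j : ℝ) + 1)) ≤ logp U :=
      logp_mono (by positivity) harg
    have hmle : mfun U b (j + 1) ≤ 1 / ((j:ℝ) + 1) ^ 2 := by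
      have := mfun_le_one_div_sq U b (j + 1)
      push_cast at this
      exact this
    rw [ht]
    calc mfun U b (j + 1) * (1 + logp (U * nint (((j : ℝ) + 1) * b) / ((j : ℝ) + 1)))
        ≤ (1 / ((j:ℝ) + 1) ^ 2) * (1 + logp U) := by
          have hl := logp_nonneg (U * nint (((j : ℝ) + 1) * b) / ((j : ℝ) + 1))
          apply mul_le_mul hmle (by linarith) (by linarith) (by positivity)
      _ = (1 + logp U) * (1 / ((j:ℝ) + 1) ^ 2) := by ring
  -- the target sum S
  set S : ℝ := ∑' j : ℕ, Kc r * ((U + 1) ^ (r + 1) * t j) with hS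
  have hSnn : 0 ≤ S := tsum_nonneg (fun j =>
    mul_nonneg (Kc_pos hr).le (mul_nonneg hA.le (htnn j)))
  have hSval : S = Kc r * (U + 1) ^ (r + 1) * ∑' j, t j := by
    rw [hS, tsum_mul_left]
    rw [tsum_mul_left, mul_assoc]
  -- main bound
  by_cases hInt : IntegrableOn
      (fun X => (U + X) ^ r * ∑ j ∈ Finset.Icc 1 ⌊X⌋₊, mfun X b j) (Ioi 1)
  · -- the interesting case
    have hFnn : 0 ≤ᵐ[volume.restrict (Ioi 1)]
        fun X => (U + X) ^ r * ∑ j ∈ Finset.Icc 1 ⌊X⌋₊, mfun X b j := by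
      filter_upwards [ae_restrict_mem measurableSet_Ioi] with X hX
      have hX1 : (1:ℝ) < X := hX
      have hUX : (0:ℝ) < U + X := by linarith
      exact mul_nonneg (Real.rpow_nonneg hUX.le r)
        (Finset.sum_nonneg fun j _ => mfun_nonneg (by linarith) b j)
    have hle : ENNReal.ofReal (∫ X in Ioi 1,
        (U + X) ^ r * ∑ j ∈ Finset.Icc 1 ⌊X⌋₊, mfun X b j) ≤ ENNReal.ofReal S := by
      rw [ofReal_integral_eq_lintegral_ofReal hInt hFnn]
      calc ∫⁻ X in Ioi 1, ENNReal.ofReal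
            ((U + X) ^ r * ∑ j ∈ Finset.Icc 1 ⌊X⌋₊, mfun X b j)
          ≤ ∫⁻ X in Ioi 1, ∑' j : ℕ, ENNReal.ofReal ((U + X) ^ r * mfun X b (j + 1)) := by
            apply lintegral_mono_ae
            filter_upwards [ae_restrict_mem measurableSet_Ioi] with X hX
            have hX1 : (1:ℝ) < X := hX
            have hUX : (0:ℝ) < U + X := by linarith
            have hre : (U + X) ^ r * ∑ j ∈ Finset.Icc 1 ⌊X⌋₊, mfun X b j =
                ∑ j ∈ Finset.range ⌊X⌋₊, (U + X) ^ r * mfun X b (j + 1) := by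
              rw [sum_Icc_reindex (fun j => mfun X b j) ⌊X⌋₊, Finset.mul_sum]
            rw [hre, ENNReal.ofReal_sum_of_nonneg (fun j _ =>
              mul_nonneg (Real.rpow_nonneg hUX.le r) (mfun_nonneg (by linarith) b (j + 1)))]
            exact ENNReal.sum_le_tsum _
        _ = ∑' j : ℕ, ∫⁻ X in Ioi 1, ENNReal.ofReal ((U + X) ^ r * mfun X b (j + 1)) := by
            apply lintegral_tsum
            intro j
            exact (((measurable_shift_rpow U r).mul
              (measurable_mfun b (j + 1))).ennreal_ofReal).aemeasurable
        _ ≤ ∑' j : ℕ, ENNReal.ofReal (Kc r * ((U + 1) ^ (r + 1) * t j)) := by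
            apply ENNReal.tsum_le_tsum
            intro j
            have hjint := key_integrable hr hU b (j + 1)
            have hjnn : 0 ≤ᵐ[volume.restrict (Ioi 1)]
                fun X => (U + X) ^ r * mfun X b (j + 1) := by
              filter_upwards [ae_restrict_mem measurableSet_Ioi] with X hX
              have hX1 : (1:ℝ) < X := hX
              have hUX : (0:ℝ) < U + X := by linarith
              exact mul_nonneg (Real.rpow_nonneg hUX.le r) (mfun_nonneg (by linarith) b (j + 1))
            rw [← ofReal_integral_eq_lintegral_ofReal hjint hjnn]
            exact ENNReal.ofReal_le_ofReal (hkey j)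
        _ = ENNReal.ofReal S := by
            rw [hS, ENNReal.ofReal_tsum_of_nonneg (fun j =>
              mul_nonneg (Kc_pos hr).le (mul_nonneg hA.le (htnn j))) ?_]
            refine Summable.congr (hsumt.mul_left (Kc r * (U + 1) ^ (r + 1))) (fun j => by ring)
    have := (ENNReal.ofReal_le_ofReal_iff hSnn).mp hle
    calc ∫ X in Ioi 1, (U + X) ^ r * ∑ j ∈ Finset.Icc 1 ⌊X⌋₊, mfun X b j ≤ S := this
      _ = Kc r * (U + 1) ^ (r + 1) * ∑' j, t j := hSval
  · -- not integrable: the integral is zero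
    rw [integral_undef hInt]
    have h1 : 0 ≤ ∑' j, t j := tsum_nonneg htnn
    have h2 : (0:ℝ) < Kc r := Kc_pos hr
    positivity
end
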